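/- Let B be a left semi-brace and I a subsemigroup of (B,+). Then I is an ideal of B if and only if: (1) I∩G is a normal subgroup of (G,+); (2) λ_g(e) ∈ I for every g ∈ G and e ∈ I∩E; (3) I·B ⊆ I and B·I ⊆ I; (4) λ_{a⁻∘x∘a}(0) ∈ I for every x ∈ I and every a ∈ G∪E; (5) I is a subgroup of (B,∘). -/
import Mathlib


/-- A left semi-brace: `(B,+)` is a left cancellative semigroup, `(B,*)` is a group
(whose identity `1` plays the role of `0` in the additive notation of the paper, and
`a⁻¹` plays the role of `a⁻`), and `a ∘ (b + c) = a ∘ b + a ∘ (a⁻ + c)` holds. -/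
class LeftSemiBrace (B : Type*) extends Group B, Add B where
  add_assoc : ∀ a b c : B, a + b + c = a + (b + c)
  add_left_cancel : ∀ a b c : B, a + b = a + c → b = c
  circ_add : ∀ a b c : B, a * (b + c) = a * b + a * (a⁻¹ + c)

namespace LeftSemiBrace

variable {B : Type*} [LeftSemiBrace B]

/-- The set `E` of additive idempotents. -/
def E (B : Type*) [LeftSemiBrace B] : Set B := {e | e + e = e}

/-- The set `G = B + 0`. -/
def G (B : Type*) [LeftSemiBrace B] : Set B := {x | ∃ b : B, x = b + 1}

/-- `λ_a (b) = a ∘ (a⁻ + b)`. -/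
def lam (a b : B) : B := a * (a⁻¹ + b)

/-- `ρ_b (a) = (a⁻ + b)⁻ ∘ b`. -/
def rho (b a : B) : B := (a⁻¹ + b)⁻¹ * b

/-- `a · b = λ_a(a⁻) + a ∘ b + λ_b(b⁻)`. -/
def dot (a b : B) : B := lam a a⁻¹ + a * b + lam b b⁻¹

/-- The group part `g_b = b + 0` of an element `b`. -/
def gp (b : B) : B := b + 1

/-- The additive inverse (within the group `(G,+)`) of the group part of an element:
for `g ∈ G` one has `neg g = -g`, since `-g_a = λ_a(a⁻) = a ∘ (a⁻ + a⁻)`. -/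
def neg (a : B) : B := a * (a⁻¹ + a⁻¹)

/-- The idempotent part `e_b = -g_b + b` of an element `b`. -/
def ep (b : B) : B := neg (gp b) + b

/-- `S` is a subsemigroup of `(B,+)`. -/
def IsAddSubsemigroup (S : Set B) : Prop := ∀ x ∈ S, ∀ y ∈ S, x + y ∈ S

/-- `S` is a subgroup of the multiplicative group `(B,∘)`. -/
def IsCircSubgroup (S : Set B) : Prop :=
  (1 : B) ∈ S ∧ (∀ x ∈ S, ∀ y ∈ S, x * y ∈ S) ∧ ∀ x ∈ S, x⁻¹ ∈ S

/-- `S` is a normal subgroup of the multiplicative group `(B,∘)`. -/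
def IsCircNormal (S : Set B) : Prop :=
  IsCircSubgroup S ∧ ∀ x ∈ S, ∀ b : B, b * x * b⁻¹ ∈ S

/-- `S` is a subgroup of the group `(G,+)`. -/
def IsAddSubgroupOfG (S : Set B) : Prop :=
  S ⊆ G B ∧ (1 : B) ∈ S ∧ (∀ x ∈ S, ∀ y ∈ S, x + y ∈ S) ∧ ∀ x ∈ S, neg x ∈ S

/-- `S` is a normal subgroup of the group `(G,+)`. -/
def IsAddNormalSubgroupOfG (S : Set B) : Prop :=
  IsAddSubgroupOfG S ∧ ∀ g ∈ G B, ∀ x ∈ S, g + x + neg g ∈ S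

/-- `I` is an ideal of the left semi-brace `B` (Definition 17 of Catino–Colazzo–Stefanelli):
`I` is a subsemigroup of `(B,+)`, a normal subgroup of `(B,∘)`, `I ∩ G` is a normal
subgroup of `(G,+)`, `ρ_b(n) ∈ I` for all `b ∈ B`, `n ∈ I ∩ G`, and `λ_g(e) ∈ I` for all
`g ∈ G`, `e ∈ I ∩ E`. -/
def IsIdeal (I : Set B) : Prop :=
  IsAddSubsemigroup I ∧ IsCircNormal I ∧ IsAddNormalSubgroupOfG (I ∩ G B) ∧
    (∀ b : B, ∀ n ∈ I ∩ G B, rho b n ∈ I) ∧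
    (∀ g ∈ G B, ∀ e ∈ I ∩ E B, lam g e ∈ I)

/-- `I` is a left ideal of the left semi-brace `B`. -/
def IsLeftIdeal (I : Set B) : Prop :=
  (∀ x ∈ I, x + 1 ∈ I) ∧ IsAddSubgroupOfG (I ∩ G B) ∧
    (∀ g ∈ G B, ∀ x ∈ I, lam g x ∈ I) ∧ IsCircSubgroup I

/-- The subgroup of `(G,+)` generated by a subset `S` of `G`. -/
def addClosure (S : Set B) : Set B :=
  ⋂₀ {T : Set B | S ⊆ T ∧ (1 : B) ∈ T ∧ (∀ x ∈ T, ∀ y ∈ T, x + y ∈ T) ∧ ∀ x ∈ T, neg x ∈ T}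

/-- `X · Y`: the subgroup of `(G,+)` generated by `{x · y : x ∈ X, y ∈ Y}`. -/
def dotSet (X Y : Set B) : Set B := addClosure {z | ∃ x ∈ X, ∃ y ∈ Y, z = dot x y}

/-- `S + E = {s + e : s ∈ S, e ∈ E}`. -/
def addE (S : Set B) : Set B := {z | ∃ s ∈ S, ∃ e ∈ E B, z = s + e}

/-- The right series of `B`: `rightSeries B n = B^(n+1)`, where `B^(1) = B` and
`B^(n+1) = B^(n) · B + E`. -/
def rightSeries (B : Type*) [LeftSemiBrace B] : ℕ → Set B
  | 0 => Set.univ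
  | n + 1 => addE (dotSet (rightSeries B n) Set.univ)

/-- The left series of `B`: `leftSeries B n = B^(n+1)`, where `B^1 = B` and
`B^(n+1) = B · B^n + E`. -/
def leftSeries (B : Type*) [LeftSemiBrace B] : ℕ → Set B
  | 0 => Set.univ
  | n + 1 => addE (dotSet Set.univ (leftSeries B n))

/-- The right series of the skew left brace `G`: `rightSeriesG B n = G^(n+1)`, where
`G^(1) = G` and `G^(n+1) = G^(n) · G`. -/
def rightSeriesG (B : Type*) [LeftSemiBrace B] : ℕ → Set B
  | 0 => G B
  | n + 1 => dotSet (rightSeriesG B n) (G B)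

/-- The series `bracketSeries B n = B^[n+1]`, where `B^[1] = B` and `B^[n+1] = H_n + E`
with `H_n` the subgroup of `(G,+)` generated by `⋃_{i=1}^{n} B^[i] · B^[n+1-i]`. -/
def bracketSeries (B : Type*) [LeftSemiBrace B] : ℕ → Set B
  | 0 => Set.univ
  | n + 1 =>
      addE (addClosure (⋃ i : Fin (n + 1),
        dotSet (bracketSeries B i.1) (bracketSeries B (n - i.1))))
  decreasing_by
  · exact i.isLt
  · exact Nat.lt_succ_of_le (Nat.sub_le n i.1)

/-- The socle `Soc(B) = {a ∈ B : ρ_a = ρ_0, λ_a = λ_0}`. -/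
def Soc (B : Type*) [LeftSemiBrace B] : Set B :=
  {a | rho a = rho (1 : B) ∧ lam a = lam (1 : B)}

/-- The generalized socle `Zoc(B) = Soc(B) + E`. -/
def Zoc (B : Type*) [LeftSemiBrace B] : Set B :=
  {z | ∃ a ∈ Soc B, ∃ e ∈ E B, z = a + e}

/-- The lower central series of the group `(G,+)`:  `γ_1 = G` and `γ_{n+1}` is the
subgroup of `(G,+)` generated by the additive commutators `-x - y + x + y` with
`x ∈ γ_n`, `y ∈ G`. -/
def lowerCentralSeriesG (B : Type*) [LeftSemiBrace B] : ℕ → Set B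
  | 0 => G B
  | n + 1 => addClosure
      {z | ∃ x ∈ lowerCentralSeriesG B n, ∃ y ∈ G B, z = neg x + neg y + x + y}

/-- The group `(G,+)` is nilpotent. -/
def IsNilpotentGAdd (B : Type*) [LeftSemiBrace B] : Prop :=
  ∃ n : ℕ, lowerCentralSeriesG B n = {(1 : B)}

/-! ### Auxiliary lemmas -/

lemma alc {a b c : B} (h : a + b = a + c) : b = c := add_left_cancel a b c h

lemma one_add' (a : B) : (1 : B) + a = a := by
  have h := circ_add (1 : B) 1 a
  rw [one_mul, one_mul, inv_one, one_mul] at h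
  exact (alc h).symm

lemma mul_eq_add_lam (a c : B) : a * c = a + lam a c := by
  have h := circ_add a 1 c
  rw [mul_one, one_add'] at h
  exact h

lemma lam_add (a b c : B) : lam a (b + c) = lam a b + lam a c := by
  show a * (a⁻¹ + (b + c)) = a * (a⁻¹ + b) + a * (a⁻¹ + c)
  rw [← add_assoc, circ_add]

lemma lam_lam (a b c : B) : lam a (lam b c) = lam (a * b) c := by
  have h1 : (a * b) * c = a * b + lam (a * b) c := mul_eq_add_lam _ _
  have h2 : (a * b) * c = a * b + lam a (lam b c) := by
    rw [mul_assoc, mul_eq_add_lam a (b * c), mul_eq_add_lam b c, lam_add, ← add_assoc,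
      ← mul_eq_add_lam a b]
  exact (alc (h1.symm.trans h2)).symm

lemma lam_one_left (c : B) : lam (1 : B) c = c := by
  show (1 : B) * ((1 : B)⁻¹ + c) = c
  rw [inv_one, one_mul, one_add']

lemma add_one_add (u v : B) : u + v = (u + 1) + v := by
  rw [add_assoc, one_add']

lemma add_neg_self (a : B) : a + neg a = 1 := by
  have h : neg a = lam a a⁻¹ := rfl
  rw [h, ← mul_eq_add_lam, mul_inv_cancel]

lemma neg_eq_neg_gp (a : B) : neg a = neg (gp a) := by
  have h1 : a + neg a = 1 := add_neg_self a
  have h2 : a + neg (gp a) = 1 := by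
    have h3 : (a + 1) + neg (gp a) = 1 := add_neg_self (gp a)
    rwa [← add_one_add] at h3
  exact alc (h1.trans h2.symm)

lemma mem_G_iff {a : B} : a ∈ G B ↔ a + 1 = a := by
  constructor
  · rintro ⟨b, rfl⟩
    rw [← add_one_add]
  · intro h
    exact ⟨a, h.symm⟩

lemma gp_G (b : B) : gp b + 1 = gp b := by
  show (b + 1) + 1 = b + 1
  rw [← add_one_add]

lemma neg_add_self {g : B} (hg : g + 1 = g) : neg g + g = 1 := by
  have h1 : g + (neg g + g) = g + 1 := by
    rw [← add_assoc, add_neg_self, one_add', hg]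
  exact alc h1

lemma neg_G {g : B} (hg : g + 1 = g) : neg g + 1 = neg g := by
  conv_lhs => rw [← add_neg_self g]
  rw [← add_assoc, neg_add_self hg, one_add']

lemma E_one {e : B} (he : e + e = e) : e + 1 = 1 := by
  have h1 : gp e + gp e = gp e + 1 := by
    show (e + 1) + (e + 1) = (e + 1) + 1
    rw [← add_one_add, ← add_assoc, he, ← add_one_add]
  exact alc h1

lemma E_absorb {e : B} (he : e + 1 = 1) (v : B) : e + v = v := by
  rw [add_one_add, he, one_add']

lemma gp_add_ep (b : B) : gp b + ep b = b := by
  show gp b + (neg (gp b) + b) = b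
  rw [← add_assoc, add_neg_self, one_add']

lemma ep_idem (b : B) : ep b + ep b = ep b := by
  show (neg (gp b) + b) + (neg (gp b) + b) = neg (gp b) + b
  have hb : b + neg (gp b) = 1 := by rw [← neg_eq_neg_gp, add_neg_self]
  rw [add_assoc, ← add_assoc b, hb, one_add']

lemma lam_E {a e : B} (he : e + e = e) : lam a e + lam a e = lam a e := by
  rw [← lam_add, he]

lemma lam_one_right (b : B) : lam b 1 = ep b := by
  have key : ∀ c : B, lam c⁻¹ 1 = ep c⁻¹ := by
    intro c
    have h1 : (1 : B) = lam c 1 + lam c (ep c⁻¹) := by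
      have hd : c * c⁻¹ = c * (gp c⁻¹ + ep c⁻¹) := by rw [gp_add_ep]
      have hc := circ_add c (gp c⁻¹) (ep c⁻¹)
      have : c * (gp c⁻¹) = lam c 1 := rfl
      rw [this] at hc
      rw [mul_inv_cancel, hc] at hd
      exact hd
    have h2 := congrArg (lam c⁻¹) h1
    rw [lam_add, lam_lam, lam_lam, inv_mul_cancel, lam_one_left, lam_one_left, one_add'] at h2
    exact h2
  have := key b⁻¹
  rwa [inv_inv] at this

lemma gp_mul_gp (a b : B) : gp (a * b) = gp (a * gp b) := by
  show a * b + 1 = a * gp b + 1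
  conv_lhs => rw [← gp_add_ep b]
  rw [circ_add, add_assoc]
  have he : a * (a⁻¹ + ep b) + 1 = 1 := by
    have : a * (a⁻¹ + ep b) = lam a (ep b) := rfl
    rw [this]
    exact E_one (lam_E (ep_idem b))
  rw [he]

lemma lam_G_one {g : B} (hg : g + 1 = g) : lam g 1 = 1 := by
  rw [lam_one_right]
  show neg (gp g) + g = 1
  have : gp g = g := by rw [gp, hg]
  rw [this, neg_add_self hg]

lemma lam_G {g x : B} (hg : g + 1 = g) : lam g x + 1 = lam g (x + 1) := by
  conv_lhs => rw [← lam_G_one hg]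
  rw [← lam_add]

lemma lam_G' {g x : B} (hg : g + 1 = g) (hx : x + 1 = x) : lam g x + 1 = lam g x := by
  rw [lam_G hg, hx]

lemma mul_G {g x : B} (hg : g + 1 = g) (hx : x + 1 = x) : g * x + 1 = g * x := by
  rw [mul_eq_add_lam, add_assoc, lam_G' hg hx]

lemma gp_one : gp (1 : B) = 1 := one_add' 1

lemma inv_E {f : B} (hf : f + 1 = 1) : f⁻¹ + 1 = 1 := by
  have h1 : gp ((1 : B)) = gp (f⁻¹ * f) := by rw [inv_mul_cancel]
  have h2 : gp (f⁻¹ * f) = gp (f⁻¹ * gp f) := gp_mul_gp _ _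
  have h3 : gp f = 1 := hf
  rw [h3, mul_one] at h2
  have := h1.trans h2
  rw [gp_one] at this
  exact this.symm

lemma inv_G {g : B} (hg : g + 1 = g) : g⁻¹ + 1 = g⁻¹ := by
  set h := gp g⁻¹ with hh
  have hhG : h + 1 = h := gp_G g⁻¹
  have h1 : (1 : B) = gp (g * gp g⁻¹) := by
    rw [← gp_mul_gp, mul_inv_cancel, gp_one]
  have h2 : gp (g * h) = g * h := mul_G hg hhG
  have h3 : g * h = 1 := by rw [← h2, ← h1]
  have h4 : h = g⁻¹ := by
    have := congrArg (fun z => g⁻¹ * z) h3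
    simp only [← mul_assoc, inv_mul_cancel, one_mul, mul_one] at this
    exact this
  rw [← h4]; exact hhG

lemma gp_mul_G {g : B} (hg : g + 1 = g) (b : B) : gp (g * b) = g + lam g (gp b) := by
  show g * b + 1 = g + lam g (gp b)
  rw [mul_eq_add_lam, add_assoc, lam_G hg]
  rfl

lemma lam_inv_self (b : B) : lam b⁻¹ b = neg (gp b⁻¹) := by
  have h : neg b⁻¹ = lam b⁻¹ b := by
    show b⁻¹ * (b⁻¹⁻¹ + b⁻¹⁻¹) = b⁻¹ * (b⁻¹⁻¹ + b)
    rw [inv_inv]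
  rw [← h, neg_eq_neg_gp]

/-- The idempotent factor of `b`: `b = gp b * mu b`. -/
def mu (b : B) : B := lam (gp b)⁻¹ (ep b)

lemma mu_idem (b : B) : mu b + mu b = mu b := lam_E (ep_idem b)

lemma gp_mul_mu (b : B) : gp b * mu b = b := by
  rw [mul_eq_add_lam, mu, lam_lam, mul_inv_cancel, lam_one_left, gp_add_ep]

lemma neg_one : neg (1 : B) = 1 := by
  show (1 : B) * ((1 : B)⁻¹ + (1 : B)⁻¹) = 1
  rw [inv_one, one_mul, one_add']

lemma G_add {g h : B} (hg : g + 1 = g) (hh : h + 1 = h) : (g + h) + 1 = g + h := by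
  rw [add_assoc, hh]

lemma addClosure_subset {S T : Set B} (hST : S ⊆ T) (h1 : (1 : B) ∈ T)
    (hadd : ∀ x ∈ T, ∀ y ∈ T, x + y ∈ T) (hneg : ∀ x ∈ T, neg x ∈ T) :
    addClosure S ⊆ T :=
  Set.sInter_subset_of_mem ⟨hST, h1, hadd, hneg⟩

lemma mem_dotSet {X Y : Set B} {x y : B} (hx : x ∈ X) (hy : y ∈ Y) :
    dot x y ∈ dotSet X Y := by
  intro T hT
  exact hT.1 ⟨x, hx, y, hy, rfl⟩

/-- `dot a b = -g_a + (g_{a∘b} + -g_b)`. -/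
lemma dot_eq (a b : B) : dot a b = neg (gp a) + (gp (a * b) + neg (gp b)) := by
  show lam a a⁻¹ + a * b + lam b b⁻¹ = _
  have h1 : lam a a⁻¹ = neg (gp a) := (neg_eq_neg_gp a : _)
  have h2 : lam b b⁻¹ = neg (gp b) := (neg_eq_neg_gp b : _)
  rw [h1, h2, add_assoc]
  congr 1
  rw [add_one_add (a * b) (neg (gp b))]
  rfl


lemma dot_eq'' (a b : B) : dot a b = lam (gp a) (gp (mu a * gp b)) + neg (gp b) := by
  have h : gp (a * b) = gp a + lam (gp a) (gp (mu a * gp b)) := by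
    rw [gp_mul_gp]
    conv_lhs => rw [← gp_mul_mu a]
    rw [mul_assoc, gp_mul_G (gp_G a)]
  rw [dot_eq, h, ← add_assoc, ← add_assoc, neg_add_self (gp_G a), one_add']

lemma dot_G (a b : B) : dot a b + 1 = dot a b := by
  rw [dot_eq'', add_assoc, neg_G (gp_G b)]

/-- let `I` be a subsemigroup of `(B,+)`. Then `I` is an ideal of `B`
iff (1) `I ∩ G` is a normal subgroup of `(G,+)`; (2) `λ_g(e) ∈ I` for all `g ∈ G`,
`e ∈ I ∩ E`; (3) `I·B ⊆ I` and `B·I ⊆ I`; (4) `λ_{a⁻∘x∘a}(0) ∈ I` for all `x ∈ I`,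
`a ∈ G ∪ E`; (5) `I` is a subgroup of `(B,∘)`. -/
theorem isIdeal_iff' (I : Set B) (hI : IsAddSubsemigroup I) :
    IsIdeal I ↔
      IsAddNormalSubgroupOfG (I ∩ G B) ∧
        (∀ g ∈ G B, ∀ e ∈ I ∩ E B, lam g e ∈ I) ∧
        (dotSet I Set.univ ⊆ I ∧ dotSet Set.univ I ⊆ I) ∧
        (∀ x ∈ I, ∀ a ∈ G B ∪ E B, lam (a⁻¹ * x * a) (1 : B) ∈ I) ∧
        IsCircSubgroup I := by
  constructor
  · rintro ⟨hAdd, ⟨hSubI, hConj⟩, ⟨⟨hNsub, hN1, hNadd, hNneg⟩, hNnorm⟩, hRho, hLam⟩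
    have h1I : (1 : B) ∈ I := hN1.1
    have gpN : ∀ x ∈ I, gp x ∈ I ∩ G B := fun x hx =>
      ⟨hAdd x hx 1 h1I, mem_G_iff.2 (gp_G x)⟩
    have Ninv : ∀ n ∈ I ∩ G B, n⁻¹ ∈ I ∩ G B := fun n hn =>
      ⟨hSubI.2.2 n hn.1, mem_G_iff.2 (inv_G (mem_G_iff.1 hn.2))⟩
    have Nmul : ∀ p ∈ I ∩ G B, ∀ q ∈ I ∩ G B, p * q ∈ I ∩ G B := fun p hp q hq =>
      ⟨hSubI.2.1 p hp.1 q hq.1, mem_G_iff.2 (mul_G (mem_G_iff.1 hp.2) (mem_G_iff.1 hq.2))⟩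
    have epI : ∀ x ∈ I, ep x ∈ I ∩ E B := fun x hx =>
      ⟨hAdd _ (hNneg _ (gpN x hx)).1 x hx, ep_idem x⟩
    have rhoN : ∀ u : B, u + 1 = u → ∀ n ∈ I ∩ G B, rho u n ∈ I ∩ G B := by
      intro u hu n hn
      refine ⟨hRho u n hn, mem_G_iff.2 ?_⟩
      have h1 : n⁻¹ + 1 = n⁻¹ := inv_G (mem_G_iff.1 hn.2)
      have h2 : (n⁻¹ + u) + 1 = n⁻¹ + u := G_add h1 hu
      exact mul_G (inv_G h2) hu
    have Flam : ∀ g : B, g + 1 = g → ∀ n ∈ I ∩ G B, lam g n ∈ I ∩ G B := by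
      intro g hg n hn
      have hgi : g⁻¹ + 1 = g⁻¹ := inv_G hg
      have hnG : n + 1 = n := mem_G_iff.1 hn.2
      have hw : (g⁻¹ + n) + neg g⁻¹ ∈ I ∩ G B := hNnorm g⁻¹ (mem_G_iff.2 hgi) n hn
      have hwi := Ninv _ hw
      have hr := hRho g⁻¹ _ hwi
      have he : rho g⁻¹ (((g⁻¹ + n) + neg g⁻¹)⁻¹) = (g⁻¹ + n)⁻¹ * g⁻¹ := by
        show ((((g⁻¹ + n) + neg g⁻¹)⁻¹)⁻¹ + g⁻¹)⁻¹ * g⁻¹ = _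
        rw [inv_inv, add_assoc (g⁻¹ + n) (neg g⁻¹) g⁻¹, neg_add_self hgi, G_add hgi hnG]
      rw [he] at hr
      have hrG : (g⁻¹ + n)⁻¹ * g⁻¹ ∈ I ∩ G B :=
        ⟨hr, mem_G_iff.2 (mul_G (inv_G (G_add hgi hnG)) hgi)⟩
      have hinv := Ninv _ hrG
      have he2 : ((g⁻¹ + n)⁻¹ * g⁻¹)⁻¹ = lam g n := by
        rw [mul_inv_rev, inv_inv, inv_inv]
        rfl
      rwa [he2] at hinv
    have qF : ∀ μ : B, μ + 1 = 1 → ∀ n ∈ I ∩ G B, gp (μ * n) ∈ I ∩ G B := by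
      intro μ hμ n hn
      have hz : μ * n * μ⁻¹ ∈ I := hConj n hn.1 μ
      have h1 : μ * n = (μ * n * μ⁻¹) * μ := by group
      have h2 : gp ((μ * n * μ⁻¹) * μ) = gp ((μ * n * μ⁻¹) * gp μ) := gp_mul_gp _ _
      have h3 : gp μ = (1 : B) := hμ
      rw [h3, mul_one] at h2
      rw [h1, h2]
      exact gpN _ hz
    have crux : ∀ μ ∈ I, μ + 1 = 1 → ∀ h : B, h + 1 = h →
        gp (μ * h) + neg h ∈ I ∩ G B := by
      intro μ hμI hμ h hh
      set u := gp (μ * h) with hu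
      have huG : u + 1 = u := gp_G _
      have hμ2 : h⁻¹ * μ * h ∈ I := by
        have := hConj μ hμI h⁻¹; rwa [inv_inv] at this
      have hn6 : gp (h⁻¹ * μ * h) ∈ I ∩ G B := gpN _ hμ2
      have he : gp (h⁻¹ * μ * h) = h⁻¹ * u := by
        rw [mul_assoc, gp_mul_gp, ← hu]
        exact mul_G (inv_G hh) huG
      rw [he] at hn6
      have hlam6 : lam h (h⁻¹ * u) ∈ I ∩ G B := Flam h hh _ hn6
      have hstep : h + lam h (h⁻¹ * u) + neg h ∈ I ∩ G B := hNnorm h (mem_G_iff.2 hh) _ hlam6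
      have he2 : u + neg h = h + lam h (h⁻¹ * u) + neg h := by
        conv_lhs => rw [show u = h * (h⁻¹ * u) by group, mul_eq_add_lam]
      rwa [← he2] at hstep
    have key1 : ∀ n ∈ I ∩ G B, ∀ μ ∈ I, μ + 1 = 1 → ∀ h : B, h + 1 = h →
        lam n (gp (μ * h)) + neg h ∈ I ∩ G B := by
      intro n hn μ hμI hμ h hh
      have hnG : n + 1 = n := mem_G_iff.1 hn.2
      set u := gp (μ * h) with hu
      have huG : u + 1 = u := gp_G _
      have hcx : u + neg h ∈ I ∩ G B := crux μ hμI hμ h hh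
      have hρ : rho u n ∈ I ∩ G B := rhoN u huG n hn
      have hρi := Ninv _ hρ
      have hcj : u⁻¹ * n * u ∈ I ∩ G B := by
        refine ⟨?_, mem_G_iff.2 (mul_G (mul_G (inv_G huG) hnG) huG)⟩
        have := hConj n hn.1 u⁻¹; rwa [inv_inv] at this
      have hn4 := Nmul _ hcj _ hρi
      set n4 := u⁻¹ * n * u * (rho u n)⁻¹ with hn4d
      have hlameq : lam n u = u + lam u n4 := by
        have h1 : lam n u = u * n4 := by
          show n * (n⁻¹ + u) = _
          rw [hn4d, show rho u n = (n⁻¹ + u)⁻¹ * u from rfl]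
          group
        rw [h1, mul_eq_add_lam]
      have hlu : lam u n4 ∈ I ∩ G B := Flam u huG _ hn4
      have step1 : u + lam u n4 + neg u ∈ I ∩ G B := hNnorm u (mem_G_iff.2 huG) _ hlu
      have hfinal := hNadd _ step1 _ hcx
      have he3 : (u + lam u n4 + neg u) + (u + neg h) = lam n u + neg h := by
        rw [hlameq, add_assoc (u + lam u n4) (neg u) (u + neg h),
          ← add_assoc (neg u) u (neg h), neg_add_self huG, one_add']
      rwa [he3] at hfinal
    refine ⟨⟨⟨hNsub, hN1, hNadd, hNneg⟩, hNnorm⟩, hLam, ⟨?_, ?_⟩, ?_, hSubI⟩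
    · refine (addClosure_subset ?_ hN1 hNadd hNneg).trans Set.inter_subset_left
      rintro z ⟨x, hx, b, -, rfl⟩
      have hμI : mu x ∈ I := hLam (gp x)⁻¹ (mem_G_iff.2 (inv_G (gp_G x))) (ep x) (epI x hx)
      rw [dot_eq'']
      exact key1 (gp x) (gpN x hx) (mu x) hμI (E_one (mu_idem x)) (gp b) (gp_G b)
    · refine (addClosure_subset ?_ hN1 hNadd hNneg).trans Set.inter_subset_left
      rintro z ⟨b, -, y, hy, rfl⟩
      have hv : gp (mu b * gp y) ∈ I ∩ G B := qF (mu b) (E_one (mu_idem b)) _ (gpN y hy)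
      have hlv : lam (gp b) (gp (mu b * gp y)) ∈ I ∩ G B := Flam _ (gp_G b) _ hv
      have := hNadd _ hlv _ (hNneg _ (gpN y hy))
      rw [dot_eq'']
      exact this
    · intro x hx a _
      have hy : a⁻¹ * x * a ∈ I := by
        have := hConj x hx a⁻¹; rwa [inv_inv] at this
      rw [lam_one_right]
      exact (epI _ hy).1
  · rintro ⟨⟨⟨hNsub, hN1, hNadd, hNneg⟩, hNnorm⟩, hLam, ⟨hIB, hBI⟩, h4, hSub⟩
    have h1I : (1 : B) ∈ I := hSub.1
    have gpN : ∀ x ∈ I, gp x ∈ I ∩ G B := fun x hx =>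
      ⟨hI x hx 1 h1I, mem_G_iff.2 (gp_G x)⟩
    have epI : ∀ x ∈ I, ep x ∈ I ∩ E B := fun x hx =>
      ⟨hI _ (hNneg _ (gpN x hx)).1 x hx, ep_idem x⟩
    have h3a : ∀ x ∈ I, ∀ b : B, gp (x * b) + neg (gp b) ∈ I ∩ G B := by
      intro x hx b
      have hdN : dot x b ∈ I ∩ G B :=
        ⟨hIB (mem_dotSet hx (Set.mem_univ b)), mem_G_iff.2 (dot_G x b)⟩
      have he : gp x + dot x b = gp (x * b) + neg (gp b) := by
        rw [dot_eq, ← add_assoc, add_neg_self, one_add']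
      rw [← he]
      exact hNadd _ (gpN x hx) _ hdN
    have h3b : ∀ b : B, ∀ y ∈ I, neg (gp b) + gp (b * y) ∈ I ∩ G B := by
      intro b y hy
      have hdN : dot b y ∈ I ∩ G B :=
        ⟨hBI (mem_dotSet (Set.mem_univ b) hy), mem_G_iff.2 (dot_G b y)⟩
      have he : dot b y + gp y = neg (gp b) + gp (b * y) := by
        rw [dot_eq]
        simp only [add_assoc]
        rw [neg_add_self (gp_G y), gp_G]
      rw [← he]
      exact hNadd _ hdN _ (gpN y hy)
    have lamN : ∀ g : B, g + 1 = g → ∀ n ∈ I ∩ G B, lam g n ∈ I ∩ G B := by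
      intro g hg n hn
      have h := h3b g n hn.1
      have he : neg (gp g) + gp (g * n) = lam g n := by
        have h1 : gp g = g := hg
        have h2 : gp (g * n) = g * n := mul_G hg (mem_G_iff.1 hn.2)
        rw [h1, h2, mul_eq_add_lam, ← add_assoc, neg_add_self hg, one_add']
      rwa [he] at h
    have qB : ∀ μ : B, μ + 1 = 1 → ∀ n ∈ I ∩ G B, gp (μ * n) ∈ I ∩ G B := by
      intro μ hμ n hn
      have h := h3b μ n hn.1
      have he : neg (gp μ) + gp (μ * n) = gp (μ * n) := by
        have h1 : gp μ = (1 : B) := hμ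
        rw [h1, neg_one, one_add']
      rwa [he] at h
    have recon : ∀ y : B, gp y ∈ I → ep y ∈ I → y ∈ I := by
      intro y h1 h2
      have hmu : mu y ∈ I :=
        hLam (gp y)⁻¹ (mem_G_iff.2 (inv_G (gp_G y))) (ep y) ⟨h2, ep_idem y⟩
      have := hSub.2.1 _ h1 _ hmu
      rwa [gp_mul_mu] at this
    have PG : ∀ g : B, g + 1 = g → ∀ x ∈ I, g⁻¹ * x * g ∈ I := by
      intro g hg x hx
      have hepy : ep (g⁻¹ * x * g) ∈ I := by
        have := h4 x hx g (Or.inl (mem_G_iff.2 hg))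
        rwa [lam_one_right] at this
      have hgg : gp g = g := hg
      have hn1 : gp (x * g) + neg g ∈ I ∩ G B := by
        have := h3a x hx g
        rwa [hgg] at this
      have hxg : (gp (x * g) + neg g) + g = gp (x * g) := by
        rw [add_assoc, neg_add_self hg, gp_G]
      have hgy : gp (g⁻¹ * x * g) ∈ I ∩ G B := by
        have hyG : gp (g⁻¹ * x * g) =
            g⁻¹ + (lam g⁻¹ (gp (x * g) + neg g) + lam g⁻¹ g) := by
          rw [mul_assoc, gp_mul_G (inv_G hg)]
          conv_lhs => rw [← hxg]
          rw [lam_add]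
        have hlg : lam g⁻¹ g = neg g⁻¹ := by
          have h5 := lam_inv_self g
          rwa [show gp g⁻¹ = g⁻¹ from inv_G hg] at h5
        rw [hlg] at hyG
        have hm : lam g⁻¹ (gp (x * g) + neg g) ∈ I ∩ G B := lamN g⁻¹ (inv_G hg) _ hn1
        have hnorm := hNnorm g⁻¹ (mem_G_iff.2 (inv_G hg)) _ hm
        rw [add_assoc] at hnorm
        rwa [← hyG] at hnorm
      exact recon _ hgy.1 hepy
    have PE : ∀ f : B, f + 1 = 1 → ∀ x ∈ I, f⁻¹ * x * f ∈ I := by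
      intro f hf x hx
      have hfE : f ∈ E B := by
        show f + f = f
        exact E_absorb hf f
      have hepy : ep (f⁻¹ * x * f) ∈ I := by
        have := h4 x hx f (Or.inr hfE)
        rwa [lam_one_right] at this
      have hn2 : gp (x * f) ∈ I ∩ G B := by
        have h := h3a x hx f
        have he : gp (x * f) + neg (gp f) = gp (x * f) := by
          have h1 : gp f = (1 : B) := hf
          rw [h1, neg_one, gp_G]
        rwa [he] at h
      have hgy : gp (f⁻¹ * x * f) ∈ I ∩ G B := by
        have he2 : gp (f⁻¹ * x * f) = gp (f⁻¹ * gp (x * f)) := by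
          rw [mul_assoc, gp_mul_gp]
        rw [he2]
        exact qB f⁻¹ (inv_E hf) _ hn2
      exact recon _ hgy.1 hepy
    have Pall : ∀ b : B, ∀ x ∈ I, b⁻¹ * x * b ∈ I := by
      intro b x hx
      have step1 : (gp b)⁻¹ * x * gp b ∈ I := PG (gp b) (gp_G b) x hx
      have step2 : (mu b)⁻¹ * ((gp b)⁻¹ * x * gp b) * mu b ∈ I :=
        PE (mu b) (E_one (mu_idem b)) _ step1
      have e1 : b⁻¹ * x * b = (mu b)⁻¹ * ((gp b)⁻¹ * x * gp b) * mu b := by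
        conv_lhs => rw [← gp_mul_mu b]
        group
      rw [e1]
      exact step2
    have rhoCond : ∀ b : B, ∀ n ∈ I ∩ G B, rho b n ∈ I := by
      intro b n hn
      have hm : n⁻¹ ∈ I ∩ G B :=
        ⟨hSub.2.2 n hn.1, mem_G_iff.2 (inv_G (mem_G_iff.1 hn.2))⟩
      have hrho : rho b n = (b⁻¹ * (n⁻¹ + b))⁻¹ := by
        show (n⁻¹ + b)⁻¹ * b = _
        rw [mul_inv_rev, inv_inv]
      have ht : b⁻¹ * (n⁻¹ + b) ∈ I := by
        have e1 : b⁻¹ * (n⁻¹ + b) = b⁻¹ * n⁻¹ + lam b⁻¹ b := circ_add b⁻¹ n⁻¹ b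
        have e2 : lam b⁻¹ b = neg (gp b⁻¹) := lam_inv_self b
        have e3 : b⁻¹ * n⁻¹ + neg (gp b⁻¹) = gp (b⁻¹ * n⁻¹) + neg (gp b⁻¹) := by
          rw [add_one_add (b⁻¹ * n⁻¹)]
          rfl
        have e4 : gp (b⁻¹ * n⁻¹) = gp b⁻¹ + lam (gp b⁻¹) (gp (mu b⁻¹ * n⁻¹)) := by
          conv_lhs => rw [← gp_mul_mu b⁻¹]
          rw [mul_assoc, gp_mul_G (gp_G b⁻¹)]
        have hv : gp (mu b⁻¹ * n⁻¹) ∈ I ∩ G B := qB _ (E_one (mu_idem b⁻¹)) _ hm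
        have hlv : lam (gp b⁻¹) (gp (mu b⁻¹ * n⁻¹)) ∈ I ∩ G B := lamN _ (gp_G b⁻¹) _ hv
        have hfin : gp b⁻¹ + lam (gp b⁻¹) (gp (mu b⁻¹ * n⁻¹)) + neg (gp b⁻¹) ∈ I ∩ G B :=
          hNnorm _ (mem_G_iff.2 (gp_G b⁻¹)) _ hlv
        have efin : b⁻¹ * (n⁻¹ + b) =
            gp b⁻¹ + lam (gp b⁻¹) (gp (mu b⁻¹ * n⁻¹)) + neg (gp b⁻¹) := by
          rw [e1, e2, e3, e4]
        rw [efin]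
        exact hfin.1
      rw [hrho]
      exact hSub.2.2 _ ht
    refine ⟨hI, ⟨hSub, ?_⟩, ⟨⟨hNsub, hN1, hNadd, hNneg⟩, hNnorm⟩, rhoCond, hLam⟩
    intro x hx b
    have := Pall b⁻¹ x hx
    rwa [inv_inv] at this

end LeftSemiBrace
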